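/- There exists a constant K such that for all positive integers l, m and all n with 0 ≤ n ≤ lm, 0 ≤ P[X_{l,m} = n] - γ_{l,m}·P[S_l^{(m)} = n] ≤ K/(l+1)^2, where γ_{l,m} = 1/(1 + 1/l). -/

import Mathlib

/-- The polynomial coefficient `C(m,n)_{l+1}`: the coefficient of `x^n` in
`(1 + x + x^2 + ⋯ + x^l)^m`. -/
noncomputable def polyCoeff (l m n : ℕ) : ℕ :=
  ((∑ i ∈ Finset.range (l + 1), (Polynomial.X : Polynomial ℕ) ^ i) ^ m).coeff n

/-- `cComp l n j` is the number of `j`-tuples of integers in `{0,…,l}` summing to `n`. -/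
noncomputable def cComp (l n j : ℕ) : ℕ :=
  Nat.card {f : Fin j → ℕ // (∀ i, f i ≤ l) ∧ ∑ i, f i = n}

/-- `hRect l m n`: the number of compositions of `n` with at most `m` parts (at least one),
each part in `{0,…,l}`. -/
noncomputable def hRect (l m n : ℕ) : ℕ := ∑ j ∈ Finset.Icc 1 m, cComp l n j

/-- `P[X_{l,m} = n]`. -/
noncomputable def probX (l m n : ℕ) : ℝ :=
  (hRect l m n : ℝ) / ∑ i ∈ Finset.range (l * m + 1), (hRect l m i : ℝ)

/-- `P[S_l^{(m)} = n] = (1/(l+1))^m · C(m,n)_{l+1}`. -/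
noncomputable def probS (l m n : ℕ) : ℝ :=
  (1 / ((l : ℝ) + 1)) ^ m * polyCoeff l m n

/-!
Write `A = l + 1`. The normaliser of `X_{l,m}` is `∑_{j=1}^m A^j = A (A^m - 1) / l`, and
`h_{l,m}(n) = C(m,n)_{l+1} + h_{l,m-1}(n)` with `C(m,n)_{l+1} ≤ A^(m-1)` and
`l · h_{l,m-1}(n) < A^(m-1)`. Since `γ_{l,m} P[S = n] = l C(m,n)_{l+1} / A^(m+1)`, the difference
is `l (C(m,n)_{l+1} + h_{l,m-1}(n) A^m) / (A^(m+1) (A^m - 1))`, and each of its two terms is at most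
`1 / A^2`; so `K = 2` works.
-/

section

open Polynomial Finset

noncomputable def geomPoly (l : ℕ) : ℕ[X] := ∑ i ∈ range (l + 1), X ^ i

lemma natDegree_geomPoly_pow_le (l j : ℕ) : (geomPoly l ^ j).natDegree ≤ l * j := by
  refine natDegree_pow_le_of_le j (natDegree_sum_le_of_forall_le _ _ fun i hi => ?_) |>.trans_eq
    (Nat.mul_comm _ _)
  simpa using Nat.lt_succ_iff.mp (mem_range.mp hi)

lemma sum_coeff_geomPoly_pow {l j N : ℕ} (hN : l * j < N) :
    ∑ i ∈ range N, (geomPoly l ^ j).coeff i = (l + 1) ^ j := by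
  have h := eval_eq_sum_range' ((natDegree_geomPoly_pow_le l j).trans_lt hN) (1 : ℕ)
  simp only [one_pow, mul_one] at h
  rw [← h]
  simp [geomPoly]

lemma coeff_geomPoly_pow (l n j : ℕ) : (geomPoly l ^ j).coeff n = cComp l n j := by
  have hexp : geomPoly l ^ j = ∑ g ∈ Fintype.piFinset fun _ : Fin j => range (l + 1),
      X ^ (∑ k, g k) := by
    rw [← Fin.prod_const, geomPoly, prod_univ_sum]
    exact sum_congr rfl fun g _ => prod_pow_eq_pow_sum _ _ _
  simp only [hexp, finsetSum_coeff, coeff_X_pow, eq_comm (a := n)]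
  rw [← card_filter, cComp, ← Nat.card_eq_finsetCard]
  refine Nat.card_congr (Equiv.subtypeEquivRight fun f => ?_)
  simp [Fintype.mem_piFinset]

lemma cComp_succ_le (l n j : ℕ) : cComp l n (j + 1) ≤ (l + 1) ^ j := by
  let init (f : {f : Fin (j + 1) → ℕ // (∀ i, f i ≤ l) ∧ ∑ i, f i = n}) :
      Fin j → Fin (l + 1) := fun i => ⟨f.1 i.castSucc, Nat.lt_succ_of_le (f.2.1 _)⟩
  have hinit : Function.Injective init := by
    rintro ⟨f, _, hf⟩ ⟨g, _, hg⟩ hfg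
    have hcast (i : Fin j) : f i.castSucc = g i.castSucc := by
      simpa [init] using congrFun hfg i
    -- the last part is determined by the others and the total `n`
    have hlast : f (Fin.last j) = g (Fin.last j) := by
      rw [Fin.sum_univ_castSucc, sum_congr rfl fun i _ => hcast i] at hf
      rw [Fin.sum_univ_castSucc] at hg
      omega
    exact Subtype.ext (funext (Fin.lastCases hlast hcast))
  simpa [cComp] using Nat.card_le_card_of_injective init hinit

lemma hRect_succ (l m n : ℕ) : hRect l (m + 1) n = hRect l m n + cComp l n (m + 1) := by
  rw [hRect, sum_Icc_succ_top (by omega), hRect]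

lemma mul_hRect_add_one_le (l m n : ℕ) : l * hRect l m n + 1 ≤ (l + 1) ^ m := by
  induction m with
  | zero => simp [hRect]
  | succ m ih =>
    rw [hRect_succ, pow_succ]
    nlinarith [cComp_succ_le l n m]

lemma sum_hRect (l m : ℕ) :
    ∑ i ∈ range (l * m + 1), hRect l m i = ∑ j ∈ Icc 1 m, (l + 1) ^ j := by
  simp only [hRect]
  rw [sum_comm]
  refine sum_congr rfl fun j hj => ?_
  simp_rw [← coeff_geomPoly_pow]
  exact sum_coeff_geomPoly_pow (Nat.lt_succ_of_le (Nat.mul_le_mul_left l (mem_Icc.mp hj).2))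

lemma mul_sum_Icc_pow_add (l m : ℕ) :
    l * ∑ j ∈ Icc 1 m, (l + 1) ^ j + (l + 1) = (l + 1) ^ (m + 1) := by
  induction m with
  | zero => simp
  | succ m ih => rw [sum_Icc_succ_top (by omega), mul_add, add_right_comm, ih]; ring

lemma error_term_bounds_of_le {l y c S Z : ℝ} (hl : 0 < l) (hc0 : 0 ≤ c) (hS0 : 0 ≤ S)
    (hc : c ≤ y) (hS : l * S + 1 ≤ y) (hZ : l * Z + (l + 1) = (l + 1) ^ 2 * y) :
    0 ≤ (S + c) / Z - 1 / (1 + 1 / l) * (c / ((l + 1) * y)) ∧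
      (S + c) / Z - 1 / (1 + 1 / l) * (c / ((l + 1) * y)) ≤ 2 / (l + 1) ^ 2 := by
  have hy : 1 ≤ y := by nlinarith
  set x := (l + 1) * y with hx_def
  have hx : l + 1 ≤ x := by nlinarith
  have hZ' : Z = (l + 1) * (x - 1) / l := by
    field_simp
    linarith
  have hD : (S + c) / Z - 1 / (1 + 1 / l) * (c / x) =
      l * (c + S * x) / ((l + 1) * x * (x - 1)) := by
    have : x ≠ 0 := by linarith
    have : x - 1 ≠ 0 := by linarith
    rw [hZ']
    field_simp
    ring
  have hx1 : 0 < x - 1 := by linarith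
  rw [hD]
  refine ⟨by positivity, ?_⟩
  have hcx : l * (l + 1) * c ≤ x * (x - 1) :=
    calc l * (l + 1) * c ≤ l * x := by rw [hx_def, ← mul_assoc]; gcongr
      _ ≤ x * (x - 1) := by nlinarith
  have hSx : l * (l + 1) * (S * x) ≤ x * (x - 1) :=
    calc l * (l + 1) * (S * x) = (l * S) * (l + 1) * x := by ring
      _ ≤ (y - 1) * (l + 1) * x := by gcongr; linarith
      _ ≤ x * (x - 1) := by nlinarith
  rw [div_le_div_iff₀ (by positivity) (by positivity)]
  nlinarith

end

/-- There is a constant `K` such that for all `l, m ≥ 1` and `0 ≤ n ≤ lm`,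
`0 ≤ P[X_{l,m}=n] - γ_{l,m} P[S_l^{(m)}=n] ≤ K/(l+1)^2` with `γ_{l,m} = 1/(1+1/l)`. -/
theorem error_term_bound :
    ∃ K : ℝ, ∀ l m n : ℕ, 1 ≤ l → 1 ≤ m → n ≤ l * m →
      0 ≤ probX l m n - (1 / (1 + 1 / (l : ℝ))) * probS l m n ∧
      probX l m n - (1 / (1 + 1 / (l : ℝ))) * probS l m n ≤ K / ((l : ℝ) + 1) ^ 2 := by
  refine ⟨2, fun l m n hl hm _ => ?_⟩
  obtain ⟨k, rfl⟩ := Nat.exists_eq_add_of_le' hm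
  have hZ : l * ∑ i ∈ Finset.range (l * (k + 1) + 1), hRect l (k + 1) i + (l + 1)
      = (l + 1) ^ 2 * (l + 1) ^ k := by
    rw [sum_hRect, mul_sum_Icc_pow_add]; ring
  have hS := mul_hRect_add_one_le l k n
  have hc := cComp_succ_le l n k
  have hprobS : probS l (k + 1) n = cComp l n (k + 1) / ((l + 1) * (l + 1) ^ k) := by
    rw [probS, polyCoeff, ← geomPoly, coeff_geomPoly_pow, ← pow_succ', one_div_pow,
      one_div_mul_eq_div]
  rw [probX, hprobS, hRect_succ]
  push_cast
  exact error_term_bounds_of_le (by exact_mod_cast hl) (by positivity) (by positivity)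
    (by exact_mod_cast hc) (by exact_mod_cast hS) (by exact_mod_cast hZ)
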